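/- arXiv:2303.08041 — 2 statements merged into one kernel-verified Lean document; each statement's English description precedes it below -/
import Mathlib

section
/- Let g be a measurable function on a probability space with 0 ≤ g ≤ 1, let 𝒢 be a sub-σ-algebra, and write E = E[·|𝒢]. Then E(g^4) - (E(g^2))^2 ≤ 4 (E(g^2) - (E g)^2) almost everywhere. -/
open MeasureTheory

theorem condVar_sq_le {Ω : Type*} {m : MeasurableSpace Ω} {m0 : MeasurableSpace Ω} {μ : Measure Ω}
    [IsProbabilityMeasure μ] (hm : m ≤ m0)
    {g : Ω → ℝ} (hg : Measurable g) (hg0 : ∀ x, 0 ≤ g x) (hg1 : ∀ x, g x ≤ 1) :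
    ∀ᵐ x ∂μ,
      (μ[fun y => g y ^ 4|m]) x - ((μ[fun y => g y ^ 2|m]) x) ^ 2 ≤
        4 * ((μ[fun y => g y ^ 2|m]) x - ((μ[g|m]) x) ^ 2) := by
  set a := μ[g|m] with ha_def
  have ha_sm : StronglyMeasurable[m] a := stronglyMeasurable_condExp
  have hg' : Measurable[m0] g := hg
  have ha_meas : Measurable[m0] a := (ha_sm.mono hm).measurable
  -- integrability helper
  have hbd : ∀ (f : Ω → ℝ) (C : ℝ), Measurable[m0] f → (∀ᵐ x ∂μ, ‖f x‖ ≤ C) →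
      Integrable f μ := fun f C hf hb =>
    (integrable_const C).mono' (hf.aestronglyMeasurable (μ := μ)) hb
  have hgpow : ∀ n : ℕ, Integrable (fun x => g x ^ n) μ := fun n =>
    hbd _ 1 (hg'.pow_const n) (ae_of_all _ fun x => by
      rw [Real.norm_eq_abs, abs_pow, abs_of_nonneg (hg0 x)]
      exact pow_le_one₀ (hg0 x) (hg1 x))
  have hg_int : Integrable g μ := by simpa using hgpow 1
  have ha0 : 0 ≤ᵐ[μ] a := condExp_nonneg (ae_of_all _ hg0)
  have ha1 : a ≤ᵐ[μ] fun _ => (1 : ℝ) := by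
    have h := condExp_mono (m := m) hg_int (integrable_const (1 : ℝ))
      (ae_of_all _ hg1)
    rw [condExp_const hm] at h
    exact h
  -- a.e. bound |a| ≤ 1
  have habd : ∀ᵐ x ∂μ, ‖a x‖ ≤ 1 := by
    filter_upwards [ha0, ha1] with x h0 h1
    rw [Real.norm_eq_abs, abs_of_nonneg h0]; exact h1
  -- the functions in the decomposition
  set F2 : Ω → ℝ := fun x => a x ^ 2 * g x ^ 2 with hF2_def
  set G2 : Ω → ℝ := fun x => a x * g x with hG2_def
  have hF2_int : Integrable F2 μ :=
    hbd _ 1 ((ha_meas.pow_const 2).mul (hg'.pow_const 2)) (by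
      filter_upwards [habd] with x hx
      rw [Real.norm_eq_abs, abs_mul, abs_pow, abs_pow, abs_of_nonneg (hg0 x)]
      have h1 : |a x| ^ 2 ≤ 1 := pow_le_one₀ (abs_nonneg _) hx
      have h2 : g x ^ 2 ≤ 1 := pow_le_one₀ (hg0 x) (hg1 x)
      nlinarith [sq_nonneg (g x), abs_nonneg (a x)])
  have hG2_int : Integrable G2 μ :=
    hbd _ 1 (ha_meas.mul hg') (by
      filter_upwards [habd] with x hx
      rw [Real.norm_eq_abs, abs_mul, abs_of_nonneg (hg0 x)]
      calc |a x| * g x ≤ 1 * 1 := by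
            exact mul_le_mul hx (hg1 x) (hg0 x) zero_le_one
        _ = 1 := mul_one 1)
  have hapow : ∀ n : ℕ, Integrable (fun x => a x ^ n) μ := fun n =>
    hbd _ 1 (ha_meas.pow_const n) (by
      filter_upwards [habd] with x hx
      rw [Real.norm_eq_abs, abs_pow]
      exact pow_le_one₀ (abs_nonneg _) hx)
  -- pull-out properties
  have hpull2 : μ[F2|m] =ᵐ[μ] fun x => a x ^ 2 * (μ[fun y => g y ^ 2|m]) x := by
    have h := condExp_mul_of_stronglyMeasurable_left (μ := μ) (ha_sm.pow 2)
      (by exact hF2_int) (hgpow 2)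
    exact h
  have hpull1 : μ[G2|m] =ᵐ[μ] fun x => a x * a x := by
    have h := condExp_mul_of_stronglyMeasurable_left (μ := μ) ha_sm
      (by exact hG2_int) hg_int
    exact h
  have hpullc : ∀ n : ℕ, μ[(fun x => a x ^ n)|m] = fun x => a x ^ n := fun n =>
    condExp_of_stronglyMeasurable hm (ha_sm.pow n) (hapow n)
  -- key pointwise inequality, conditioned
  set F : Ω → ℝ := (fun x => g x ^ 4) + ((-2 : ℝ) • F2 + fun x => a x ^ 4) with hF_def
  set G : Ω → ℝ := (4 : ℝ) • ((fun x => g x ^ 2) + ((-2 : ℝ) • G2 + fun x => a x ^ 2))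
    with hG_def
  have hF_int : Integrable F μ :=
    ((hgpow 4).add ((hF2_int.smul (-2 : ℝ)).add (hapow 4)))
  have hGin : Integrable ((fun x => g x ^ 2) + ((-2 : ℝ) • G2 + fun x => a x ^ 2)) μ :=
    ((hgpow 2).add ((hG2_int.smul (-2 : ℝ)).add (hapow 2)))
  have hG_int : Integrable G μ := hGin.smul (4 : ℝ)
  have hkey : F ≤ᵐ[μ] G := by
    filter_upwards [ha0, ha1] with x h0 h1
    show g x ^ 4 + ((-2 : ℝ) * (a x ^ 2 * g x ^ 2) + a x ^ 4) ≤
      4 * (g x ^ 2 + ((-2 : ℝ) * (a x * g x) + a x ^ 2))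
    have h0' : (0:ℝ) ≤ a x := h0
    have hfac : (0:ℝ) ≤ (g x - a x) ^ 2 * ((2 - (g x + a x)) * (2 + (g x + a x))) :=
      mul_nonneg (sq_nonneg _)
        (mul_nonneg (by linarith [hg1 x]) (by linarith [hg0 x]))
    nlinarith [hfac]
  have hmono : μ[F|m] ≤ᵐ[μ] μ[G|m] := condExp_mono hF_int hG_int hkey
  -- expand both conditional expectations
  have hFexp : μ[F|m] =ᵐ[μ]
      fun x => (μ[fun y => g y ^ 4|m]) x - 2 * (a x ^ 2 * (μ[fun y => g y ^ 2|m]) x)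
        + a x ^ 4 := by
    have h1 : μ[F|m] =ᵐ[μ]
        μ[(fun x => g x ^ 4)|m] + μ[((-2 : ℝ) • F2 + fun x => a x ^ 4)|m] :=
      condExp_add (hgpow 4) ((hF2_int.smul (-2 : ℝ)).add (hapow 4)) _
    have h2 : μ[((-2 : ℝ) • F2 + fun x => a x ^ 4)|m] =ᵐ[μ]
        μ[(-2 : ℝ) • F2|m] + μ[(fun x => a x ^ 4)|m] :=
      condExp_add (hF2_int.smul (-2 : ℝ)) (hapow 4) _
    have h3 : μ[(-2 : ℝ) • F2|m] =ᵐ[μ] (-2 : ℝ) • μ[F2|m] := condExp_smul _ _ _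
    filter_upwards [h1, h2, h3, hpull2] with x e1 e2 e3 e4
    simp only [Pi.add_apply, Pi.smul_apply, smul_eq_mul] at e1 e2 e3 ⊢
    rw [e1, e2, e3, hpullc 4, e4]
    ring
  have hGexp : μ[G|m] =ᵐ[μ]
      fun x => 4 * ((μ[fun y => g y ^ 2|m]) x - 2 * (a x * a x) + a x ^ 2) := by
    have h0 : μ[G|m] =ᵐ[μ]
        (4 : ℝ) • μ[((fun x => g x ^ 2) + ((-2 : ℝ) • G2 + fun x => a x ^ 2))|m] :=
      condExp_smul _ _ _
    have h1 : μ[((fun x => g x ^ 2) + ((-2 : ℝ) • G2 + fun x => a x ^ 2))|m] =ᵐ[μ]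
        μ[(fun x => g x ^ 2)|m] + μ[((-2 : ℝ) • G2 + fun x => a x ^ 2)|m] :=
      condExp_add (hgpow 2) ((hG2_int.smul (-2 : ℝ)).add (hapow 2)) _
    have h2 : μ[((-2 : ℝ) • G2 + fun x => a x ^ 2)|m] =ᵐ[μ]
        μ[(-2 : ℝ) • G2|m] + μ[(fun x => a x ^ 2)|m] :=
      condExp_add (hG2_int.smul (-2 : ℝ)) (hapow 2) _
    have h3 : μ[(-2 : ℝ) • G2|m] =ᵐ[μ] (-2 : ℝ) • μ[G2|m] := condExp_smul _ _ _
    filter_upwards [h0, h1, h2, h3, hpull1] with x e0 e1 e2 e3 e4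
    simp only [Pi.add_apply, Pi.smul_apply, smul_eq_mul] at e0 e1 e2 e3 ⊢
    rw [e0, e1, e2, e3, hpullc 2, e4]
    ring
  filter_upwards [hmono, hFexp, hGexp] with x hle eF eG
  rw [eF, eG] at hle
  nlinarith [sq_nonneg ((μ[fun y => g y ^ 2|m]) x - a x ^ 2)]
end

section
/- Let (Ω, 𝒢, P) be a probability space and ℋ ⊆ 𝒢 a countably generated sub-σ-algebra. Let F, G ∈ L^∞(Ω, 𝒢, P) with F ≥ G a.e., E[F|ℋ] ≥ 0 a.e., and E[G|ℋ] ≤ 0 a.e. Then there exists H ∈ L^∞(Ω, 𝒢, P) with G ≤ H ≤ F a.e. and E[H|ℋ] = 0 a.e. -/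
open MeasureTheory

theorem exists_intermediate_condexp_zero {Ω : Type*} {m : MeasurableSpace Ω} {m0 : MeasurableSpace Ω} {μ : Measure Ω}
    [IsProbabilityMeasure μ] (hm : m ≤ m0)
    (hcg : @MeasurableSpace.CountablyGenerated Ω m)
    {F G : Ω → ℝ} (hF : Measurable F) (hG : Measurable G)
    (hFbdd : ∃ C, ∀ x, |F x| ≤ C) (hGbdd : ∃ C, ∀ x, |G x| ≤ C)
    (hFG : ∀ᵐ x ∂μ, G x ≤ F x)
    (hFpos : ∀ᵐ x ∂μ, 0 ≤ (μ[F|m]) x) (hGneg : ∀ᵐ x ∂μ, (μ[G|m]) x ≤ 0) :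
    ∃ H : Ω → ℝ, Measurable H ∧ (∃ C, ∀ x, |H x| ≤ C) ∧
      (∀ᵐ x ∂μ, G x ≤ H x ∧ H x ≤ F x) ∧ μ[H|m] =ᵐ[μ] 0 := by
  obtain ⟨C, hC⟩ := hFbdd
  obtain ⟨C', hC'⟩ := hGbdd
  set f : Ω → ℝ := μ[F|m] with hf_def
  set g : Ω → ℝ := μ[G|m] with hg_def
  have hfm : StronglyMeasurable[m] f := stronglyMeasurable_condExp
  have hgm : StronglyMeasurable[m] g := stronglyMeasurable_condExp
  set s : Ω → ℝ := fun x => max 0 (min 1 (-(g x) / (f x - g x))) with hs_def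
  have hs0 : ∀ x, 0 ≤ s x := fun x => le_max_left _ _
  have hs1 : ∀ x, s x ≤ 1 := fun x => max_le zero_le_one (min_le_left _ _)
  have hsm : Measurable[m] s := by
    have hfm' : Measurable[m] f := hfm.measurable
    have hgm' : Measurable[m] g := hgm.measurable
    exact (measurable_const.max ((measurable_const.min
      (hgm'.neg.div (hfm'.sub hgm')))))
  set H : Ω → ℝ := fun x => s x * F x + (1 - s x) * G x with hH_def
  have hF0 : Measurable[m0] F := hF
  have hG0 : Measurable[m0] G := hG
  have hs0' : Measurable[m0] s := hsm.mono hm le_rfl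
  have hHmeas : Measurable H := ((hs0'.mul hF).add ((measurable_const.sub hs0').mul hG))
  have hHbdd : ∀ x, |H x| ≤ max C C' := by
    intro x
    have h1 : |s x * F x| ≤ s x * max C C' := by
      rw [abs_mul, abs_of_nonneg (hs0 x)]
      exact mul_le_mul_of_nonneg_left ((hC x).trans (le_max_left _ _)) (hs0 x)
    have h2 : |(1 - s x) * G x| ≤ (1 - s x) * max C C' := by
      rw [abs_mul, abs_of_nonneg (by linarith [hs1 x])]
      exact mul_le_mul_of_nonneg_left ((hC' x).trans (le_max_right _ _)) (by linarith [hs1 x])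
    calc |H x| ≤ |s x * F x| + |(1 - s x) * G x| := abs_add_le _ _
      _ ≤ s x * max C C' + (1 - s x) * max C C' := add_le_add h1 h2
      _ = max C C' := by ring
  have hInt : ∀ (u : Ω → ℝ), Measurable[m0] u → (∀ x, |u x| ≤ max C C') → Integrable u μ := by
    intro u hu hub
    exact (memLp_top_of_bound (hu.aestronglyMeasurable (μ := μ)) _ (ae_of_all μ hub)).integrable le_top
  have hFint : Integrable F μ :=
    hInt F hF0 fun x => (hC x).trans (le_max_left _ _)
  have hGint : Integrable G μ :=
    hInt G hG0 fun x => (hC' x).trans (le_max_right _ _)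
  have hsFint : Integrable (fun x => s x * F x) μ := by
    refine hInt _ (hs0'.mul hF0) fun x => ?_
    rw [abs_mul, abs_of_nonneg (hs0 x)]
    calc s x * |F x| ≤ 1 * |F x| := mul_le_mul_of_nonneg_right (hs1 x) (abs_nonneg _)
      _ ≤ max C C' := by rw [one_mul]; exact (hC x).trans (le_max_left _ _)
  have hsGint : Integrable (fun x => (1 - s x) * G x) μ := by
    refine hInt _ ((measurable_const.sub hs0').mul hG0) fun x => ?_
    rw [abs_mul, abs_of_nonneg (by linarith [hs1 x])]
    calc (1 - s x) * |G x| ≤ 1 * |G x| :=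
        mul_le_mul_of_nonneg_right (by linarith [hs0 x]) (abs_nonneg _)
      _ ≤ max C C' := by rw [one_mul]; exact (hC' x).trans (le_max_right _ _)
  refine ⟨H, hHmeas, ⟨max C C', hHbdd⟩, ?_, ?_⟩
  · filter_upwards [hFG] with x hx
    constructor
    · have : H x - G x = s x * (F x - G x) := by simp only [hH_def]; ring
      nlinarith [hs0 x, hs1 x]
    · have : F x - H x = (1 - s x) * (F x - G x) := by simp only [hH_def]; ring
      nlinarith [hs0 x, hs1 x]
  · have h1 : μ[H|m] =ᵐ[μ] μ[fun x => s x * F x|m] + μ[fun x => (1 - s x) * G x|m] :=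
      condExp_add hsFint hsGint m
    have h2 : μ[fun x => s x * F x|m] =ᵐ[μ] fun x => s x * f x := by
      have := condExp_mul_of_stronglyMeasurable_left (μ := μ) hsm.stronglyMeasurable
        (by simpa [Pi.mul_def] using hsFint) hFint
      simpa [Pi.mul_def] using this
    have h3 : μ[fun x => (1 - s x) * G x|m] =ᵐ[μ] fun x => (1 - s x) * g x := by
      have hsm' : StronglyMeasurable[m] (fun x => 1 - s x) :=
        stronglyMeasurable_const.sub hsm.stronglyMeasurable
      have := condExp_mul_of_stronglyMeasurable_left (μ := μ) hsm'
        (by simpa [Pi.mul_def] using hsGint) hGint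
      simpa [Pi.mul_def] using this
    have hzero : ∀ᵐ x ∂μ, s x * f x + (1 - s x) * g x = 0 := by
      filter_upwards [hFpos, hGneg] with x hfx hgx
      rcases eq_or_lt_of_le (by linarith : (0:ℝ) ≤ f x - g x) with h | h
      · have hfg : f x = g x := by linarith
        have hf0 : f x = 0 := le_antisymm (by linarith) hfx
        have hg0 : g x = 0 := by linarith
        simp [hf0, hg0]
      · have hne : f x - g x ≠ 0 := ne_of_gt h
        have hsx : s x = -(g x) / (f x - g x) := by
          have ht0 : 0 ≤ -(g x) / (f x - g x) := div_nonneg (by linarith) h.le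
          have ht1 : -(g x) / (f x - g x) ≤ 1 := by
            rw [div_le_one h]; linarith
          simp [hs_def, min_eq_right ht1, max_eq_right ht0]
        rw [hsx]
        field_simp
        ring
    calc μ[H|m] =ᵐ[μ] μ[fun x => s x * F x|m] + μ[fun x => (1 - s x) * G x|m] := h1
      _ =ᵐ[μ] fun x => s x * f x + (1 - s x) * g x := h2.add h3
      _ =ᵐ[μ] 0 := hzero
end
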